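/- Let λ̃ ≥ 0, and let C be the 3D elasticity tensor CE = λ̃ tr(E) I + 2E on Sym(3,ℝ). Let Q ∈ GL(3,ℝ) with QᵀQ = blockdiag(A, 1), where A ∈ Sym(2,ℝ) is positive definite. Let γ ∈ Sym(3,ℝ), π ∈ ℝ, α ∈ ℝ, and suppose the third column of Qᵀ(C(QγQᵀ) − απ I)Q vanishes, i.e. (Qᵀ(C(QγQᵀ) − απ I)Q)_{i3} = 0 for i = 1, 2, 3. Then γ_{13} = γ_{23} = 0 and γ_{33} = (α/(λ̃+2)) π − (λ̃/(λ̃+2)) (A : γ̄), where γ̄ is the upper-left 2×2 block of γ. -/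

import Mathlib

open Matrix

/-- Frobenius inner product `A : B = tr(A Bᵀ)`. -/
noncomputable def frob {n : ℕ} (A B : Matrix (Fin n) (Fin n) ℝ) : ℝ :=
  (A * Bᵀ).trace

/-- The 3D elasticity tensor `CE = λ̃ tr(E) I + 2E`. -/
noncomputable def C3 (lam : ℝ) (E : Matrix (Fin 3) (Fin 3) ℝ) :
    Matrix (Fin 3) (Fin 3) ℝ :=
  (lam * E.trace) • (1 : Matrix (Fin 3) (Fin 3) ℝ) + (2 : ℝ) • E

/-- Block diagonal matrix `blockdiag(A, 1)`. -/
def bd (A : Matrix (Fin 2) (Fin 2) ℝ) : Matrix (Fin 3) (Fin 3) ℝ :=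
  !![A 0 0, A 0 1, 0; A 1 0, A 1 1, 0; 0, 0, 1]

/-- Upper-left 2×2 block of a 3×3 matrix. -/
def ul (g : Matrix (Fin 3) (Fin 3) ℝ) : Matrix (Fin 2) (Fin 2) ℝ :=
  Matrix.of fun i j => g i.castSucc j.castSucc

/- Conjugating by `Q` turns `C(QγQᵀ)` into an expression in the Gram matrix `G = QᵀQ` alone, since
`tr(QγQᵀ) = tr(γG)`. For `G = blockdiag(A, 1)` the first two entries of the third column are
`2 A (γ₁₃, γ₂₃)`, which vanish only for `γ₁₃ = γ₂₃ = 0` because `A` is invertible; the last entry is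
`λ̃ (A : γ̄) + (λ̃ + 2) γ₃₃ − απ` once `γ` is symmetric. -/

theorem transpose_mul_C3_sub_smul_mul (lam s : ℝ) (Q γ : Matrix (Fin 3) (Fin 3) ℝ) :
    Qᵀ * (C3 lam (Q * γ * Qᵀ) - s • (1 : Matrix (Fin 3) (Fin 3) ℝ)) * Q =
      (lam * (γ * (Qᵀ * Q)).trace - s) • (Qᵀ * Q) + (2 : ℝ) • ((Qᵀ * Q) * γ * (Qᵀ * Q)) := by
  have htrace : (Q * γ * Qᵀ).trace = (γ * (Qᵀ * Q)).trace := by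
    rw [trace_mul_comm, ← Matrix.mul_assoc, trace_mul_comm]
  rw [C3, htrace]
  simp only [Matrix.mul_sub, Matrix.sub_mul, Matrix.mul_add, Matrix.add_mul,
    Matrix.mul_smul, Matrix.smul_mul, Matrix.mul_one, sub_smul, Matrix.mul_assoc]
  abel

theorem mul_bd_apply_two (M : Matrix (Fin 3) (Fin 3) ℝ) (A : Matrix (Fin 2) (Fin 2) ℝ)
    (i : Fin 3) : (M * bd A) i 2 = M i 2 := by
  simp [Matrix.mul_apply, Fin.sum_univ_three, bd]

theorem bd_apply_castSucc_two (A : Matrix (Fin 2) (Fin 2) ℝ) (i : Fin 2) :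
    bd A i.castSucc 2 = 0 := by
  fin_cases i <;> rfl

theorem bd_mul_mul_bd_apply_castSucc_two (A : Matrix (Fin 2) (Fin 2) ℝ)
    (γ : Matrix (Fin 3) (Fin 3) ℝ) (i : Fin 2) :
    (bd A * γ * bd A) i.castSucc 2 = (A *ᵥ fun j => γ j.castSucc 2) i := by
  rw [mul_bd_apply_two]
  fin_cases i <;> simp [Matrix.mul_apply, Matrix.mulVec, dotProduct, Fin.sum_univ_three, bd]

theorem bd_mul_mul_bd_apply_two_two (A : Matrix (Fin 2) (Fin 2) ℝ)
    (γ : Matrix (Fin 3) (Fin 3) ℝ) : (bd A * γ * bd A) 2 2 = γ 2 2 := by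
  rw [mul_bd_apply_two]
  simp [Matrix.mul_apply, Fin.sum_univ_three, bd]

theorem trace_mul_bd (A : Matrix (Fin 2) (Fin 2) ℝ) (γ : Matrix (Fin 3) (Fin 3) ℝ) :
    (γ * bd A).trace = frob A (ul γᵀ) + γ 2 2 := by
  simp only [frob, ul, bd, Matrix.trace, Matrix.diag, Matrix.mul_apply, Fin.sum_univ_three,
    Fin.sum_univ_two, Matrix.transpose_apply, Matrix.of_apply, cons_val', cons_val_zero,
    cons_val_one, cons_val, cons_val_fin_one, Fin.castSucc_zero, Fin.castSucc_one]
  ring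

theorem stmt6_general (lam : ℝ) (hlam : 0 ≤ lam)
    (Q : Matrix (Fin 3) (Fin 3) ℝ)
    (A : Matrix (Fin 2) (Fin 2) ℝ) (hApd : A.PosDef)
    (hQTQ : Qᵀ * Q = bd A)
    (γ : Matrix (Fin 3) (Fin 3) ℝ) (hγ : γ.IsSymm)
    (π0 α : ℝ)
    (hcol : ∀ i : Fin 3,
      (Qᵀ * (C3 lam (Q * γ * Qᵀ) - (α * π0) • (1 : Matrix (Fin 3) (Fin 3) ℝ)) * Q) i 2 = 0) :
    γ 0 2 = 0 ∧ γ 1 2 = 0 ∧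
      γ 2 2 = (α / (lam + 2)) * π0 - (lam / (lam + 2)) * frob A (ul γ) := by
  simp only [transpose_mul_C3_sub_smul_mul, hQTQ, Matrix.add_apply, Matrix.smul_apply,
    smul_eq_mul] at hcol
  have hcolumn : (A *ᵥ fun j => γ j.castSucc 2) = 0 := by
    ext i
    have := hcol i.castSucc
    rw [bd_apply_castSucc_two, bd_mul_mul_bd_apply_castSucc_two] at this
    simpa using this
  have hzero := Matrix.mulVec_injective_of_isUnit hApd.isUnit (hcolumn.trans (mulVec_zero A).symm)
  refine ⟨congrFun hzero 0, congrFun hzero 1, ?_⟩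
  have hdiag := hcol 2
  rw [bd_mul_mul_bd_apply_two_two, trace_mul_bd, hγ.eq] at hdiag
  have hlam2 : lam + 2 ≠ 0 := by positivity
  field_simp
  rw [show bd A 2 2 = 1 from rfl] at hdiag
  linear_combination hdiag

/-- If the third column of `Qᵀ(C(QγQᵀ) − απ I)Q` vanishes, then `γ₁₃ = γ₂₃ = 0` and
`γ₃₃ = (α/(λ̃+2))π − (λ̃/(λ̃+2))(A : γ̄)`. -/
theorem stmt6 (lam : ℝ) (hlam : 0 ≤ lam)
    (Q : Matrix (Fin 3) (Fin 3) ℝ) (hQ : IsUnit Q.det)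
    (A : Matrix (Fin 2) (Fin 2) ℝ) (hAsym : A.IsSymm) (hApd : A.PosDef)
    (hQTQ : Qᵀ * Q = bd A)
    (γ : Matrix (Fin 3) (Fin 3) ℝ) (hγ : γ.IsSymm)
    (π0 α : ℝ)
    (hcol : ∀ i : Fin 3,
      (Qᵀ * (C3 lam (Q * γ * Qᵀ) - (α * π0) • (1 : Matrix (Fin 3) (Fin 3) ℝ)) * Q) i 2 = 0) :
    γ 0 2 = 0 ∧ γ 1 2 = 0 ∧
      γ 2 2 = (α / (lam + 2)) * π0 - (lam / (lam + 2)) * frob A (ul γ) :=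
  stmt6_general lam hlam Q A hApd hQTQ γ hγ π0 α hcol
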